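/- arXiv:1012.1594 — 10 statements merged into one kernel-verified Lean document; each statement's English description precedes it below -/
import Mathlib

section
/- Let a, b, x₁, x₂ be unit quaternions with ⟪x₁, a⟫ = 0, ⟪x₁, b⟫ > 0, ⟪x₂, b⟫ = 0 and ⟪x₂, a⟫ > 0. Then a⁻¹·x₁ ≠ b⁻¹·x₂. (Consequently the left projection of the angle formed by the dual great spheres a* and b*, which maps points of a* with ⟪·, b⟫ > 0 by left multiplication by a⁻¹ and points of b* with ⟪·, a⟫ > 0 by left multiplication by b⁻¹, is injective.) -/
open scoped Quaternion RealInnerProductSpace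

/-! Put `u := a⁻¹ * x₁ = b⁻¹ * x₂`, so `x₁ = a * u` and `x₂ = b * u`. The identity
`⟪a * u, b⟫ + ⟪b * u, a⟫ = 2 * re u * ⟪a, b⟫` (from `u + conj u = 2 re u`) first gives, for
`b = a`, that `u` is pure since `⟪x₁, a⟫ = 0`, and then that `⟪x₁, b⟫ + ⟪x₂, a⟫ = 0`, so the
two inner products cannot both be positive. -/

lemma Quaternion.inner_mul_add_inner_mul (a b u : ℍ[ℝ]) :
    ⟪a * u, b⟫ + ⟪b * u, a⟫ = 2 * u.re * ⟪a, b⟫ := by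
  simp only [Quaternion.inner_def, Quaternion.re_mul, Quaternion.imI_mul, Quaternion.imJ_mul,
    Quaternion.imK_mul, Quaternion.re_star, Quaternion.imI_star, Quaternion.imJ_star,
    Quaternion.imK_star]
  ring

lemma Quaternion.inner_mul_left_self (a u : ℍ[ℝ]) : ⟪a * u, a⟫ = u.re * ⟪a, a⟫ := by
  linarith [Quaternion.inner_mul_add_inner_mul a a u]

theorem stmt_3_general (a b x₁ x₂ : ℍ[ℝ])
    (h1 : ⟪x₁, a⟫ = 0) (h2 : 0 < ⟪x₁, b⟫)
    (h4 : 0 < ⟪x₂, a⟫) :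
    a⁻¹ * x₁ ≠ b⁻¹ * x₂ := by
  intro h
  set u := a⁻¹ * x₁
  have ha : a ≠ 0 := by rintro rfl; simp at h4
  have hb : b ≠ 0 := by rintro rfl; simp at h2
  have hx₁ : a * u = x₁ := mul_inv_cancel_left₀ ha x₁
  have hx₂ : b * u = x₂ := by rw [h, mul_inv_cancel_left₀ hb]
  have hu_re : u.re = 0 := by
    have := Quaternion.inner_mul_left_self a u
    rw [hx₁, h1, eq_comm, mul_eq_zero] at this
    exact this.resolve_right (inner_self_ne_zero.mpr ha)
  have hsum := Quaternion.inner_mul_add_inner_mul a b u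
  rw [hx₁, hx₂, hu_re] at hsum
  linarith

/-- Injectivity of the left projection of the angle formed by the dual great spheres
`a*` and `b*`: if `x₁` lies on `a*` with `⟪x₁, b⟫ > 0` and `x₂` lies on `b*` with
`⟪x₂, a⟫ > 0`, then `a⁻¹ * x₁ ≠ b⁻¹ * x₂`. -/
theorem stmt_3 (a b x₁ x₂ : ℍ[ℝ]) (ha : ‖a‖ = 1) (hb : ‖b‖ = 1)
    (hx₁ : ‖x₁‖ = 1) (hx₂ : ‖x₂‖ = 1)
    (h1 : ⟪x₁, a⟫ = 0) (h2 : 0 < ⟪x₁, b⟫)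
    (h3 : ⟪x₂, b⟫ = 0) (h4 : 0 < ⟪x₂, a⟫) :
    a⁻¹ * x₁ ≠ b⁻¹ * x₂ :=
  stmt_3_general a b x₁ x₂ h1 h2 h4
end

section
/- Let a, b, x be unit quaternions with ⟪x, a⟫ = 0 and ⟪x, b⟫ = 0. Then re(a⁻¹·x) = 0, re(b⁻¹·x) = 0, ⟪a⁻¹·x, a⁻¹·b⟫ = 0 and ⟪b⁻¹·x, a⁻¹·b⟫ = 0; that is, both a⁻¹x and b⁻¹x lie on the great circle e* ∩ (a⁻¹b)*, so that the left projections of the edge E = a* ∩ b* from its two sides land on a common great circle of the sphere e*. -/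
open scoped Quaternion RealInnerProductSpace

/-!
Left multiplication by `u` scales the inner product by `normSq u`, and `re q = ⟪q, 1⟫`; so
`a⁻¹x` and `b⁻¹x` are orthogonal to `a⁻¹a = 1`, to `a⁻¹b` and to `b⁻¹a` respectively. Finally,
a pure quaternion orthogonal to `q` is orthogonal to `star q`, hence to `q⁻¹`, and `a⁻¹b = (b⁻¹a)⁻¹`.
-/

namespace Quaternion

theorem re_mul_comm {R : Type*} [CommRing R] (a b : ℍ[R]) : (a * b).re = (b * a).re := by
  simp only [re_mul]
  ring

theorem re_coe_mul {R : Type*} [CommRing R] (r : R) (a : ℍ[R]) : ((r : ℍ[R]) * a).re = r * a.re := by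
  rw [coe_mul_eq_smul, re_smul, smul_eq_mul]

theorem inner_mul_mul_left (u x y : ℍ[ℝ]) : ⟪u * x, u * y⟫ = normSq u * ⟪x, y⟫ := by
  rw [inner_def, inner_def, star_mul, ← mul_assoc, re_mul_comm _ (star u), ← mul_assoc,
    ← mul_assoc, star_mul_self, mul_assoc, re_coe_mul]

theorem re_inv_mul (a x : ℍ[ℝ]) : (a⁻¹ * x).re = (normSq a)⁻¹ * ⟪x, a⟫ := by
  rw [re_mul_comm, inv_def, mul_smul_comm, re_smul, smul_eq_mul, inner_def]

theorem inner_inv_right_eq_zero {p q : ℍ[ℝ]} (hp : p.re = 0) (h : ⟪p, q⟫ = 0) : ⟪p, q⁻¹⟫ = 0 := by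
  have h_star : ⟪p, star q⟫ = 0 := by
    simp only [inner_def, re_mul, star_star, re_star, imI_star, imJ_star, imK_star] at h ⊢
    rw [hp] at h ⊢
    linarith
  rw [inv_def, inner_smul_right, h_star, mul_zero]

end Quaternion

open Quaternion in
theorem stmt_4_general (a b x : ℍ[ℝ])
    (h1 : ⟪x, a⟫ = 0) (h2 : ⟪x, b⟫ = 0) :
    (a⁻¹ * x).re = 0 ∧ (b⁻¹ * x).re = 0 ∧
      ⟪a⁻¹ * x, a⁻¹ * b⟫ = 0 ∧ ⟪b⁻¹ * x, a⁻¹ * b⟫ = 0 := by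
  have hax : (a⁻¹ * x).re = 0 := by rw [re_inv_mul, h1, mul_zero]
  have hbx : (b⁻¹ * x).re = 0 := by rw [re_inv_mul, h2, mul_zero]
  refine ⟨hax, hbx, by rw [inner_mul_mul_left, h2, mul_zero], ?_⟩
  have h_ba : ⟪b⁻¹ * x, b⁻¹ * a⟫ = 0 := by rw [inner_mul_mul_left, h1, mul_zero]
  simpa only [mul_inv_rev, inv_inv] using inner_inv_right_eq_zero hbx h_ba

/-- If `x` lies on the edge `E = a* ∩ b*`, then the two left projections `a⁻¹x`
and `b⁻¹x` both lie on the great circle `e* ∩ (a⁻¹b)*`. -/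
theorem stmt_4 (a b x : ℍ[ℝ]) (ha : ‖a‖ = 1) (hb : ‖b‖ = 1) (hx : ‖x‖ = 1)
    (h1 : ⟪x, a⟫ = 0) (h2 : ⟪x, b⟫ = 0) :
    (a⁻¹ * x).re = 0 ∧ (b⁻¹ * x).re = 0 ∧
      ⟪a⁻¹ * x, a⁻¹ * b⟫ = 0 ∧ ⟪b⁻¹ * x, a⁻¹ * b⟫ = 0 :=
  stmt_4_general a b x h1 h2
end

section
/- Fix c, β ∈ (0, π). Let I ⊆ (0, π) be an open interval and b, γ : I → (0, π) functions such that for every a ∈ I: cos(b(a)) = cos c · cos a + sin c · sin a · cos β, and cos c = cos a · cos(b(a)) + sin a · sin(b(a)) · cos(γ(a)). Then b is differentiable on I with b′(a) = cos(γ(a)) for every a ∈ I. -/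
/-!
On `(0, π)` the cosine inverts to `arccos`, so the first cosine law exhibits `b` near `a` as
`arccos` of a smooth function of `a`, and the chain rule gives
`b' = (cos c sin a - sin c cos a cos β) / sin b`. Eliminating `cos b` between the two cosine
laws turns the numerator into `sin b cos γ` (the five-part formula), whence `b' = cos γ`.
-/

open Real Set Filter Topology

theorem Real.hasDerivAt_arccos_cos {y : ℝ} (hy : y ∈ Ioo 0 π) :
    HasDerivAt arccos (-(sin y)⁻¹) (cos y) := by
  have hsin : 0 < sin y := sin_pos_of_pos_of_lt_pi hy.1 hy.2
  have hsq : cos y ^ 2 < 1 := by nlinarith [sin_sq_add_cos_sq y]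
  have hne_neg_one : cos y ≠ -1 := fun h => by norm_num [h] at hsq
  have hne_one : cos y ≠ 1 := fun h => by norm_num [h] at hsq
  simpa [← sin_eq_sqrt_one_sub_cos_sq hy.1.le hy.2.le] using
    hasDerivAt_arccos hne_neg_one hne_one

theorem hasDerivAt_of_eventually_cos_eq {f b : ℝ → ℝ} {f' a : ℝ} (hf : HasDerivAt f f' a)
    (hb : ∀ᶠ x in 𝓝 a, b x ∈ Icc 0 π) (hcos : ∀ᶠ x in 𝓝 a, cos (b x) = f x)
    (hba : b a ∈ Ioo 0 π) : HasDerivAt b (-f' / sin (b a)) a := by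
  have hb_eq : (fun x => arccos (f x)) =ᶠ[𝓝 a] b := by
    filter_upwards [hb, hcos] with x hbx hcosx
    rw [← hcosx, arccos_cos hbx.1 hbx.2]
  have harccos : HasDerivAt arccos (-(sin (b a))⁻¹) (f a) := by
    simpa [hcos.self_of_nhds] using hasDerivAt_arccos_cos hba
  refine ((harccos.comp a hf).congr_of_eventuallyEq hb_eq.symm).congr_deriv ?_
  ring

theorem sin_mul_cos_eq_of_cos_laws {a b c β γ : ℝ} (ha : sin a ≠ 0)
    (law1 : cos b = cos c * cos a + sin c * sin a * cos β)
    (law2 : cos c = cos a * cos b + sin a * sin b * cos γ) :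
    sin b * cos γ = cos c * sin a - sin c * cos a * cos β := by
  apply mul_left_cancel₀ ha
  linear_combination -(law2 + cos a * law1 + cos c * sin_sq_add_cos_sq a)

theorem stmt_6_general (c β : ℝ)
    (lo hi : ℝ) (hI : Ioo lo hi ⊆ Ioo 0 π)
    (b γ : ℝ → ℝ)
    (hb : ∀ a ∈ Ioo lo hi, b a ∈ Ioo 0 π)
    (law1 : ∀ a ∈ Ioo lo hi, cos (b a) = cos c * cos a + sin c * sin a * cos β)
    (law2 : ∀ a ∈ Ioo lo hi, cos c = cos a * cos (b a) + sin a * sin (b a) * cos (γ a)) :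
    ∀ a ∈ Ioo lo hi, HasDerivAt b (cos (γ a)) a := by
  intro a ha
  have hI_nhds : Ioo lo hi ∈ 𝓝 a := isOpen_Ioo.mem_nhds ha
  have hsin_a : sin a ≠ 0 := (sin_pos_of_pos_of_lt_pi (hI ha).1 (hI ha).2).ne'
  have hsin_b : sin (b a) ≠ 0 := (sin_pos_of_pos_of_lt_pi (hb a ha).1 (hb a ha).2).ne'
  have hF : HasDerivAt (fun x => cos c * cos x + sin c * sin x * cos β)
      (sin c * cos a * cos β - cos c * sin a) a := by
    refine (((hasDerivAt_cos a).const_mul (cos c)).add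
      (((hasDerivAt_sin a).const_mul (sin c)).mul_const (cos β))).congr_deriv ?_
    ring
  have hderiv := hasDerivAt_of_eventually_cos_eq hF
    (eventually_of_mem hI_nhds fun x hx => Ioo_subset_Icc_self (hb x hx))
    (eventually_of_mem hI_nhds law1) (hb a ha)
  convert hderiv using 1
  rw [neg_sub, ← sin_mul_cos_eq_of_cos_laws hsin_a (law1 a ha) (law2 a ha)]
  field_simp

/-- Spherical trigonometry: with `c, β` fixed and `b`, `γ` the side and angle
determined by the cosine laws as functions of the side `a`,
one has `∂b/∂a = cos γ`. -/
theorem stmt_6 (c β : ℝ) (hc : c ∈ Ioo 0 π) (hβ : β ∈ Ioo 0 π)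
    (lo hi : ℝ) (hI : Ioo lo hi ⊆ Ioo 0 π)
    (b γ : ℝ → ℝ)
    (hb : ∀ a ∈ Ioo lo hi, b a ∈ Ioo 0 π)
    (hγ : ∀ a ∈ Ioo lo hi, γ a ∈ Ioo 0 π)
    (law1 : ∀ a ∈ Ioo lo hi, cos (b a) = cos c * cos a + sin c * sin a * cos β)
    (law2 : ∀ a ∈ Ioo lo hi, cos c = cos a * cos (b a) + sin a * sin (b a) * cos (γ a)) :
    ∀ a ∈ Ioo lo hi, HasDerivAt b (cos (γ a)) a :=
  stmt_6_general c β lo hi hI b γ hb law1 law2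
end

section
/- Fix c, β ∈ (0, π). Let I ⊆ (0, π) be an open interval and b, α, γ : I → (0, π) functions such that for every a ∈ I: cos(b(a)) = cos c · cos a + sin c · sin a · cos β, cos c = cos a · cos(b(a)) + sin a · sin(b(a)) · cos(γ(a)), and cos a = cos(b(a)) · cos c + sin(b(a)) · sin c · cos(α(a)). Then α is differentiable on I with α′(a) = sin(γ(a)) / sin(b(a)) for every a ∈ I. -/
/-!
The four-part formula `cot α sin β = cot a sin c - cos c cos β` expresses `α` through `a` alone,
as `α = π/2 - arctan ((cot a sin c - cos c cos β) / sin β)`. Differentiating gives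
`α' = sin c sin² α / (sin² a sin β)`, and the sine rule `sin α / sin a = sin β / sin b = sin γ / sin c`
turns this into `sin γ / sin b`.
-/

open Real Set Filter Topology

theorem Real.hasDerivAt_cot {x : ℝ} (hx : sin x ≠ 0) : HasDerivAt cot (-1 / sin x ^ 2) x := by
  have h : HasDerivAt (fun y => cos y / sin y) _ x := (hasDerivAt_cos x).div (hasDerivAt_sin x) hx
  rw [show cot = fun y => cos y / sin y from funext fun y => cot_eq_cos_div_sin y]
  refine h.congr_deriv ?_
  linear_combination (-1 / sin x ^ 2) * sin_sq_add_cos_sq x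

theorem hasDerivAt_of_cot_eq {θ K : ℝ → ℝ} {K' a : ℝ} (hθ : ∀ᶠ x in 𝓝 a, θ x ∈ Ioo 0 π)
    (hK : ∀ᶠ x in 𝓝 a, cot (θ x) = K x) (hK' : HasDerivAt K K' a) :
    HasDerivAt θ (-K' * sin (θ a) ^ 2) a := by
  have heq : θ =ᶠ[𝓝 a] fun x => π / 2 - arctan (K x) := by
    filter_upwards [hθ, hK] with x ⟨h0, hπ⟩ hx
    rw [← hx, ← tan_inv_eq_cot, ← tan_pi_div_two_sub,
      arctan_tan (by linarith) (by linarith), sub_sub_cancel]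
  have hsin : sin (θ a) ≠ 0 := (sin_pos_of_mem_Ioo hθ.self_of_nhds).ne'
  refine ((hK'.arctan.const_sub (π / 2)).congr_of_eventuallyEq heq).congr_deriv ?_
  rw [← hK.self_of_nhds, cot_eq_cos_div_sin]
  field_simp
  linear_combination K' * sin_sq_add_cos_sq (θ a)

theorem spherical_five_part {a b c α β : ℝ} (hc : sin c ≠ 0)
    (h₁ : cos b = cos c * cos a + sin c * sin a * cos β)
    (h₃ : cos a = cos b * cos c + sin b * sin c * cos α) :
    sin b * cos α = cos a * sin c - sin a * cos c * cos β := by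
  refine mul_left_cancel₀ hc ?_
  linear_combination -h₃ - cos c * h₁ - cos a * sin_sq_add_cos_sq c

theorem spherical_sine_rule {a b c α β : ℝ} (hc : sin c ≠ 0)
    (ha : 0 ≤ sin a) (hb : 0 ≤ sin b) (hα : 0 ≤ sin α) (hβ : 0 ≤ sin β)
    (h₁ : cos b = cos c * cos a + sin c * sin a * cos β)
    (h₃ : cos a = cos b * cos c + sin b * sin c * cos α) :
    sin b * sin α = sin a * sin β := by
  have h₅ := spherical_five_part hc h₁ h₃
  refine (pow_left_inj₀ (by positivity) (by positivity) two_ne_zero).1 ?_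
  calc (sin b * sin α) ^ 2 = sin b ^ 2 - (sin b * cos α) ^ 2 := by
        linear_combination sin b ^ 2 * sin_sq_add_cos_sq α
    _ = 1 - cos b ^ 2 - (sin b * cos α) ^ 2 := by rw [sin_sq]
    _ = (sin a * sin β) ^ 2 := by
        rw [h₁, h₅]
        linear_combination -(cos a ^ 2 + sin a ^ 2 * cos β ^ 2) * sin_sq_add_cos_sq c
          - sin a ^ 2 * sin_sq_add_cos_sq β - sin_sq_add_cos_sq a

theorem spherical_four_part {a b c α β : ℝ} (ha : 0 < sin a) (hb : 0 ≤ sin b) (hc : sin c ≠ 0)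
    (hα : 0 < sin α) (hβ : 0 ≤ sin β)
    (h₁ : cos b = cos c * cos a + sin c * sin a * cos β)
    (h₃ : cos a = cos b * cos c + sin b * sin c * cos α) :
    cot α * sin β = cot a * sin c - cos c * cos β := by
  have h₅ := spherical_five_part hc h₁ h₃
  have hs := spherical_sine_rule hc ha.le hb hα.le hβ h₁ h₃
  rw [cot_eq_cos_div_sin, cot_eq_cos_div_sin]
  field_simp
  linear_combination sin α * h₅ - cos α * hs

/-- Spherical trigonometry: with `c, β` fixed and `b`, `γ`, `α` determined by the
cosine laws as functions of the side `a`, one has `∂α/∂a = sin γ / sin b`. -/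
theorem stmt_7 (c β : ℝ) (hc : c ∈ Ioo 0 π) (hβ : β ∈ Ioo 0 π)
    (lo hi : ℝ) (hI : Ioo lo hi ⊆ Ioo 0 π)
    (b α γ : ℝ → ℝ)
    (hb : ∀ a ∈ Ioo lo hi, b a ∈ Ioo 0 π)
    (hα : ∀ a ∈ Ioo lo hi, α a ∈ Ioo 0 π)
    (hγ : ∀ a ∈ Ioo lo hi, γ a ∈ Ioo 0 π)
    (law1 : ∀ a ∈ Ioo lo hi, cos (b a) = cos c * cos a + sin c * sin a * cos β)
    (law2 : ∀ a ∈ Ioo lo hi, cos c = cos a * cos (b a) + sin a * sin (b a) * cos (γ a))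
    (law3 : ∀ a ∈ Ioo lo hi, cos a = cos (b a) * cos c + sin (b a) * sin c * cos (α a)) :
    ∀ a ∈ Ioo lo hi, HasDerivAt α (sin (γ a) / sin (b a)) a := by
  intro a ha
  have hnhds : Ioo lo hi ∈ 𝓝 a := isOpen_Ioo.mem_nhds ha
  have hsa : 0 < sin a := sin_pos_of_mem_Ioo (hI ha)
  have hsb : 0 < sin (b a) := sin_pos_of_mem_Ioo (hb a ha)
  have hsc : 0 < sin c := sin_pos_of_mem_Ioo hc
  have hsβ : 0 < sin β := sin_pos_of_mem_Ioo hβ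
  have hcot : ∀ᶠ x in 𝓝 a, cot (α x) = (cot x * sin c - cos c * cos β) / sin β := by
    filter_upwards [hnhds] with x hx
    rw [eq_div_iff hsβ.ne']
    exact spherical_four_part (sin_pos_of_mem_Ioo (hI hx)) (sin_pos_of_mem_Ioo (hb x hx)).le
      hsc.ne' (sin_pos_of_mem_Ioo (hα x hx)) hsβ.le (law1 x hx) (law3 x hx)
  have hderiv := hasDerivAt_of_cot_eq (eventually_of_mem hnhds hα) hcot
    ((((hasDerivAt_cot hsa.ne').mul_const (sin c)).sub_const (cos c * cos β)).div_const (sin β))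
  have hsine_α := spherical_sine_rule hsc.ne' hsa.le hsb.le
    (sin_pos_of_mem_Ioo (hα a ha)).le hsβ.le (law1 a ha) (law3 a ha)
  have hsine_γ := spherical_sine_rule (a := c) (c := a) hsa.ne' hsc.le hsb.le
    (sin_pos_of_mem_Ioo (hγ a ha)).le hsβ.le (by linear_combination law1 a ha)
    (by linear_combination law2 a ha)
  convert hderiv using 1
  field_simp
  refine mul_left_cancel₀ hsb.ne' ?_
  linear_combination sin a ^ 2 * sin β * hsine_γ
    - sin c * (sin (b a) * sin (α a) + sin a * sin β) * hsine_α
end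

section
/- Fix a, β ∈ (0, π). Let I ⊆ (0, π) be an open interval and b, α : I → (0, π) functions such that for every c ∈ I: cos(b(c)) = cos c · cos a + sin c · sin a · cos β, and cos a = cos(b(c)) · cos c + sin(b(c)) · sin c · cos(α(c)). Then α is differentiable on I with α′(c) = − sin(α(c)) · cos(b(c)) / sin(b(c)) for every c ∈ I. -/
/-!
Near `c` the side `b` and the angle `α` are recovered from the cosine laws as arccosines:
`b = arccos (cos c cos a + sin c sin a cos β)` and
`α = arccos ((cos a - cos b cos c) / (sin b sin c))`. Differentiating the first and using the
five-part formula `sin b cos α = sin c cos a - cos c sin a cos β` gives `b' = cos α`; feeding this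
into the derivative of the second gives `α' = - sin α cos b / sin b`.
-/

open Real Set Filter Topology

theorem hasDerivAt_of_cos_eventuallyEq {f g : ℝ → ℝ} {f' c : ℝ}
    (hg : ∀ᶠ x in 𝓝 c, g x ∈ Icc 0 π ∧ cos (g x) = f x) (hgc : sin (g c) ≠ 0)
    (hf : HasDerivAt f f' c) : HasDerivAt g (-f' / sin (g c)) c := by
  have hcos : cos (g c) = f c := hg.self_of_nhds.2
  have hgc_mem : g c ∈ Icc 0 π := hg.self_of_nhds.1
  have hsq := sin_sq_add_cos_sq (g c)
  have hsin_sq : 0 < sin (g c) ^ 2 := by positivity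
  have hne_neg : f c ≠ -1 := fun h => by nlinarith
  have hne_pos : f c ≠ 1 := fun h => by nlinarith
  have hsqrt : √(1 - f c ^ 2) = sin (g c) := by
    rw [← sin_arccos, ← hcos, arccos_cos hgc_mem.1 hgc_mem.2]
  have hg_eq : g =ᶠ[𝓝 c] fun x => arccos (f x) :=
    hg.mono fun x ⟨hx, hcosx⟩ => by
      show g x = arccos (f x)
      rw [← hcosx, arccos_cos hx.1 hx.2]
  have harccos := (hasDerivAt_arccos hne_neg hne_pos).comp c hf
  refine (harccos.congr_of_eventuallyEq hg_eq).congr_deriv ?_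
  rw [hsqrt]
  ring

theorem sin_mul_cos_eq_of_cosine_laws {a b c α β : ℝ} (hc : sin c ≠ 0)
    (law1 : cos b = cos c * cos a + sin c * sin a * cos β)
    (law2 : cos a = cos b * cos c + sin b * sin c * cos α) :
    sin b * cos α = sin c * cos a - cos c * sin a * cos β := by
  apply mul_right_cancel₀ hc
  linear_combination -law2 - cos c * law1 - cos a * sin_sq_add_cos_sq c

theorem hasDerivAt_side_of_cosine_laws {a β c α : ℝ} {b : ℝ → ℝ}
    (hb : ∀ᶠ x in 𝓝 c, b x ∈ Icc 0 π ∧ cos (b x) = cos x * cos a + sin x * sin a * cos β)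
    (hbc : sin (b c) ≠ 0) (hc : sin c ≠ 0)
    (law2 : cos a = cos (b c) * cos c + sin (b c) * sin c * cos α) :
    HasDerivAt b (cos α) c := by
  have hF : HasDerivAt (fun x => cos x * cos a + sin x * sin a * cos β)
      (-sin c * cos a + cos c * sin a * cos β) c :=
    (((hasDerivAt_cos c).mul_const _).add (((hasDerivAt_sin c).mul_const _).mul_const _))
  have five_part := sin_mul_cos_eq_of_cosine_laws hc hb.self_of_nhds.2 law2
  refine (hasDerivAt_of_cos_eventuallyEq hb hbc hF).congr_deriv ?_
  field_simp
  linear_combination -five_part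

theorem hasDerivAt_angle_of_cosine_law {a c : ℝ} {b α : ℝ → ℝ}
    (hb : HasDerivAt b (cos (α c)) c) (hbc : sin (b c) ≠ 0) (hc : sin c ≠ 0)
    (hα : ∀ᶠ x in 𝓝 c, α x ∈ Icc 0 π ∧
      cos a = cos (b x) * cos x + sin (b x) * sin x * cos (α x))
    (hαc : sin (α c) ≠ 0) :
    HasDerivAt α (-(sin (α c) * cos (b c)) / sin (b c)) c := by
  have hN : HasDerivAt (fun x => cos a - cos (b x) * cos x)
      (-(-sin (b c) * cos (α c) * cos c + cos (b c) * -sin c)) c := by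
    simpa using (hb.cos.mul (hasDerivAt_cos c)).const_sub (cos a)
  have hD : HasDerivAt (fun x => sin (b x) * sin x)
      (cos (b c) * cos (α c) * sin c + sin (b c) * cos c) c :=
    hb.sin.mul (hasDerivAt_sin c)
  have hG := hN.div hD (mul_ne_zero hbc hc)
  have hD_ne : ∀ᶠ x in 𝓝 c, sin (b x) * sin x ≠ 0 :=
    hD.continuousAt.eventually_ne (mul_ne_zero hbc hc)
  have hα_cos : ∀ᶠ x in 𝓝 c, α x ∈ Icc 0 π ∧
      cos (α x) = (cos a - cos (b x) * cos x) / (sin (b x) * sin x) :=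
    (hα.and hD_ne).mono fun x ⟨⟨hx, law2⟩, hne⟩ =>
      ⟨hx, by rw [eq_div_iff hne, law2]; ring⟩
  refine (hasDerivAt_of_cos_eventuallyEq hα_cos hαc hG).congr_deriv ?_
  -- after substituting the cosine law at `c`, the numerator of the quotient rule collapses to
  -- `sin b · sin² c · cos b · sin² α`
  rw [hα.self_of_nhds.2]
  field_simp
  linear_combination sin (b c) * sin c ^ 2 * cos (b c) *
    sin_sq_add_cos_sq (α c)

theorem stmt_8_general (a β : ℝ)
    (lo hi : ℝ) (hI : Ioo lo hi ⊆ Ioo 0 π)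
    (b α : ℝ → ℝ)
    (hb : ∀ c ∈ Ioo lo hi, b c ∈ Ioo 0 π)
    (hα : ∀ c ∈ Ioo lo hi, α c ∈ Ioo 0 π)
    (law1 : ∀ c ∈ Ioo lo hi, cos (b c) = cos c * cos a + sin c * sin a * cos β)
    (law2 : ∀ c ∈ Ioo lo hi, cos a = cos (b c) * cos c + sin (b c) * sin c * cos (α c)) :
    ∀ c ∈ Ioo lo hi, HasDerivAt α (-(sin (α c) * cos (b c)) / sin (b c)) c := by
  intro c hc
  have hnear : ∀ᶠ x in 𝓝 c, x ∈ Ioo lo hi := Ioo_mem_nhds hc.1 hc.2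
  have sin_ne {x : ℝ} (hx : x ∈ Ioo 0 π) : sin x ≠ 0 := (sin_pos_of_mem_Ioo hx).ne'
  have hb' : HasDerivAt b (cos (α c)) c :=
    hasDerivAt_side_of_cosine_laws
      (hnear.mono fun x hx => ⟨Ioo_subset_Icc_self (hb x hx), law1 x hx⟩)
      (sin_ne (hb c hc)) (sin_ne (hI hc)) (law2 c hc)
  exact hasDerivAt_angle_of_cosine_law hb' (sin_ne (hb c hc)) (sin_ne (hI hc))
    (hnear.mono fun x hx => ⟨Ioo_subset_Icc_self (hα x hx), law2 x hx⟩) (sin_ne (hα c hc))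

/-- Spherical trigonometry: with `a, β` fixed and `b`, `α` determined by the cosine
laws as functions of the side `c`, one has `∂α/∂c = - sin α · cos b / sin b`. -/
theorem stmt_8 (a β : ℝ) (ha : a ∈ Ioo 0 π) (hβ : β ∈ Ioo 0 π)
    (lo hi : ℝ) (hI : Ioo lo hi ⊆ Ioo 0 π)
    (b α : ℝ → ℝ)
    (hb : ∀ c ∈ Ioo lo hi, b c ∈ Ioo 0 π)
    (hα : ∀ c ∈ Ioo lo hi, α c ∈ Ioo 0 π)
    (law1 : ∀ c ∈ Ioo lo hi, cos (b c) = cos c * cos a + sin c * sin a * cos β)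
    (law2 : ∀ c ∈ Ioo lo hi, cos a = cos (b c) * cos c + sin (b c) * sin c * cos (α c)) :
    ∀ c ∈ Ioo lo hi, HasDerivAt α (-(sin (α c) * cos (b c)) / sin (b c)) c :=
  stmt_8_general a β lo hi hI b α hb hα law1 law2
end

section
/- Fix b, c ∈ (0, π). Let I ⊆ (0, π) be an open interval and α, γ : I → (0, π) functions such that for every a ∈ I: cos a = cos b · cos c + sin b · sin c · cos(α(a)), and cos c = cos a · cos b + sin a · sin b · cos(γ(a)). Then α is differentiable on I with α′(a) = 1 / (sin b · sin(γ(a))) for every a ∈ I. -/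
open Real Set

/-! The cosine law at the vertex `A` expresses `α` as
`arccos ((cos a - cos b cos c) / (sin b sin c))`, so by the chain rule
`α' = sin a / (sin b sin c sin α)`. The spherical law of sines `sin c sin α = sin a sin γ`,
obtained by squaring both cosine laws, turns this into `1 / (sin b sin γ)`. -/

/-- The Gram determinant of the three unit vertex vectors of a spherical triangle with sides
`a, b, c`. -/
noncomputable def sphericalGramDet (a b c : ℝ) : ℝ :=
  1 - cos a ^ 2 - cos b ^ 2 - cos c ^ 2 + 2 * cos a * cos b * cos c

lemma sphericalGramDet_rotate (a b c : ℝ) : sphericalGramDet c a b = sphericalGramDet a b c := by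
  unfold sphericalGramDet; ring

lemma sq_sin_mul_sin_mul_sin_eq_sphericalGramDet {a b c α : ℝ}
    (law : cos a = cos b * cos c + sin b * sin c * cos α) :
    (sin b * sin c * sin α) ^ 2 = sphericalGramDet a b c := by
  unfold sphericalGramDet
  linear_combination (sin b ^ 2 * sin c ^ 2) * sin_sq_add_cos_sq α
    + (sin b * sin c * cos α + cos a - cos b * cos c) * law
    + sin c ^ 2 * sin_sq_add_cos_sq b + (1 - cos b ^ 2) * sin_sq_add_cos_sq c

lemma sin_mul_sin_eq_of_cos_laws {a b c α γ : ℝ} (hb : sin b ≠ 0)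
    (hα : 0 ≤ sin c * sin α) (hγ : 0 ≤ sin a * sin γ)
    (law1 : cos a = cos b * cos c + sin b * sin c * cos α)
    (law2 : cos c = cos a * cos b + sin a * sin b * cos γ) :
    sin c * sin α = sin a * sin γ := by
  have h1 := sq_sin_mul_sin_mul_sin_eq_sphericalGramDet law1
  have h2 := sq_sin_mul_sin_mul_sin_eq_sphericalGramDet law2
  rw [sphericalGramDet_rotate] at h2
  have hsq : sin b ^ 2 * (sin c * sin α) ^ 2 = sin b ^ 2 * (sin a * sin γ) ^ 2 := by
    linear_combination h1 - h2
  exact (pow_left_inj₀ hα hγ two_ne_zero).mp (mul_left_cancel₀ (pow_ne_zero 2 hb) hsq)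

lemma div_eq_cos_of_cos_law {a b c α : ℝ} (hbc : sin b * sin c ≠ 0)
    (law : cos a = cos b * cos c + sin b * sin c * cos α) :
    (cos a - cos b * cos c) / (sin b * sin c) = cos α := by
  rw [div_eq_iff hbc]; linarith

lemma eq_arccos_of_cos_law {a b c α : ℝ} (hbc : sin b * sin c ≠ 0) (hα : α ∈ Icc 0 π)
    (law : cos a = cos b * cos c + sin b * sin c * cos α) :
    α = arccos ((cos a - cos b * cos c) / (sin b * sin c)) := by
  rw [div_eq_cos_of_cos_law hbc law, arccos_cos hα.1 hα.2]

lemma hasDerivAt_arccos_of_cos_law {a b c α : ℝ} (hbc : sin b * sin c ≠ 0) (hα : α ∈ Ioo 0 π)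
    (law : cos a = cos b * cos c + sin b * sin c * cos α) :
    HasDerivAt (fun x ↦ arccos ((cos x - cos b * cos c) / (sin b * sin c)))
      (sin a / (sin b * sin c * sin α)) a := by
  have hcos := div_eq_cos_of_cos_law hbc law
  have hlt : cos α < 1 := by
    simpa using cos_lt_cos_of_nonneg_of_le_pi le_rfl hα.2.le hα.1
  have hgt : -1 < cos α := by
    simpa using cos_lt_cos_of_nonneg_of_le_pi hα.1.le le_rfl hα.2
  have hsqrt : √(1 - cos α ^ 2) = sin α := (sin_eq_sqrt_one_sub_cos_sq hα.1.le hα.2.le).symm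
  have hinner : HasDerivAt (fun x ↦ (cos x - cos b * cos c) / (sin b * sin c))
      (-sin a / (sin b * sin c)) a :=
    ((hasDerivAt_cos a).sub_const _).div_const _
  have hcomp := (hasDerivAt_arccos (hcos ▸ hgt.ne') (hcos ▸ hlt.ne)).comp a hinner
  rw [hcos, hsqrt] at hcomp
  exact hcomp.congr_deriv (by field_simp)

/-- Spherical trigonometry: with the sides `b, c` fixed and the angles `α`, `γ`
determined by the cosine laws as functions of the side `a`, one has
`∂α/∂a = 1 / (sin b · sin γ)`. -/
theorem stmt_9 (b c : ℝ) (hb : b ∈ Ioo 0 π) (hc : c ∈ Ioo 0 π)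
    (lo hi : ℝ) (hI : Ioo lo hi ⊆ Ioo 0 π)
    (α γ : ℝ → ℝ)
    (hα : ∀ a ∈ Ioo lo hi, α a ∈ Ioo 0 π)
    (hγ : ∀ a ∈ Ioo lo hi, γ a ∈ Ioo 0 π)
    (law1 : ∀ a ∈ Ioo lo hi, cos a = cos b * cos c + sin b * sin c * cos (α a))
    (law2 : ∀ a ∈ Ioo lo hi, cos c = cos a * cos b + sin a * sin b * cos (γ a)) :
    ∀ a ∈ Ioo lo hi, HasDerivAt α (1 / (sin b * sin (γ a))) a := by
  intro a ha
  have hsb := sin_pos_of_mem_Ioo hb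
  have hsc := sin_pos_of_mem_Ioo hc
  have hsα := sin_pos_of_mem_Ioo (hα a ha)
  have hsγ := sin_pos_of_mem_Ioo (hγ a ha)
  have hbc : sin b * sin c ≠ 0 := (mul_pos hsb hsc).ne'
  have hlocal : (fun x ↦ arccos ((cos x - cos b * cos c) / (sin b * sin c))) =ᶠ[nhds a] α := by
    filter_upwards [isOpen_Ioo.mem_nhds ha] with x hx
    exact (eq_arccos_of_cos_law hbc (Ioo_subset_Icc_self (hα x hx)) (law1 x hx)).symm
  have hsine : sin c * sin (α a) = sin a * sin (γ a) :=
    sin_mul_sin_eq_of_cos_laws hsb.ne' (mul_pos hsc hsα).le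
      (mul_pos (sin_pos_of_mem_Ioo (hI ha)) hsγ).le (law1 a ha) (law2 a ha)
  refine ((hasDerivAt_arccos_of_cos_law hbc (hα a ha) (law1 a ha)).congr_of_eventuallyEq
    hlocal.symm).congr_deriv ?_
  rw [div_eq_div_iff (mul_ne_zero hbc hsα.ne') (mul_pos hsb hsγ).ne']
  linear_combination -sin b * hsine
end

section
/- Fix c ∈ (0, π) and β ∈ ℝ. Let I ⊆ (0, π) be an open interval and b : I → (0, ∞), α, γ : I → ℝ functions such that for every a ∈ I: cosh(b(a)) = cos c · cos a + sin c · sin a · cosh β, cos a = cosh(b(a)) · cos c − sinh(b(a)) · sin c · sinh(α(a)), and cos c = cos a · cosh(b(a)) − sin a · sinh(b(a)) · sinh(γ(a)). Then α is differentiable on I with α′(a) = cosh(γ(a)) / sinh(b(a)) for every a ∈ I. -/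
/-!
The first law writes `b` as `arcosh` of an explicit function of `a`; multiplying its derivative
by `sin a` and using the third law gives `b' = sinh γ`. Solving the second law for `sinh α` and
differentiating with `b' = sinh γ` gives `(sinh α)' = sin a cosh² γ / (sinh b sin c)`. The sine
law `sin c cosh α = sin a cosh γ`, which follows by squaring the second and third laws, turns
this into `cosh α · cosh γ / sinh b`.
-/

open Real Set
open Filter Topology

theorem hasDerivAt_of_sinh_comp_eventuallyEq {f g : ℝ → ℝ} {g' a : ℝ} (hg : HasDerivAt g g' a)
    (hfg : (fun x => sinh (f x)) =ᶠ[𝓝 a] g) : HasDerivAt f (g' / cosh (f a)) a := by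
  have hf : f =ᶠ[𝓝 a] arsinh ∘ g := hfg.mono fun x hx => by simp [← hx]
  have hcosh : √(1 + g a ^ 2) = cosh (f a) := by
    rw [← hfg.eq_of_nhds, ← cosh_arsinh, arsinh_sinh]
  simpa [div_eq_mul_inv, mul_comm, hcosh] using
    ((hasDerivAt_arsinh (g a)).comp a hg).congr_of_eventuallyEq hf

theorem hasDerivAt_of_cosh_comp_eventuallyEq {f g : ℝ → ℝ} {g' a : ℝ} (hg : HasDerivAt g g' a)
    (hf : ∀ᶠ x in 𝓝 a, 0 ≤ f x) (hfg : (fun x => cosh (f x)) =ᶠ[𝓝 a] g) (ha : 0 < f a) :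
    HasDerivAt f (g' / sinh (f a)) a := by
  have hf' : f =ᶠ[𝓝 a] arcosh ∘ g :=
    (hf.and hfg).mono fun x hx => by simp [← hx.2, arcosh_cosh hx.1]
  have hga : g a ∈ Ioi 1 := by rw [← hfg.eq_of_nhds]; exact one_lt_cosh.2 ha.ne'
  have hsinh : √(g a ^ 2 - 1) = sinh (f a) := by
    rw [← hfg.eq_of_nhds, ← sinh_arcosh (one_le_cosh _), arcosh_cosh ha.le]
  simpa [div_eq_mul_inv, mul_comm, hsinh] using
    ((hasDerivAt_arcosh hga).comp a hg).congr_of_eventuallyEq hf'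

theorem hasDerivAt_cosine_law_rhs (c k a : ℝ) :
    HasDerivAt (fun x => cos c * cos x + sin c * sin x * k)
      (-(cos c * sin a) + sin c * cos a * k) a :=
  (((hasDerivAt_cos a).const_mul (cos c)).add
    (((hasDerivAt_sin a).const_mul (sin c)).mul_const k)).congr_deriv (by ring)

theorem hasDerivAt_spacelike_side {b : ℝ → ℝ} {a c k g : ℝ}
    (hb : ∀ᶠ x in 𝓝 a, 0 < b x ∧ cosh (b x) = cos c * cos x + sin c * sin x * k)
    (ha : sin a ≠ 0) (law3 : cos c = cos a * cosh (b a) - sin a * sinh (b a) * sinh g) :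
    HasDerivAt b (sinh g) a := by
  have hba : 0 < b a := hb.self_of_nhds.1
  refine (hasDerivAt_of_cosh_comp_eventuallyEq (hasDerivAt_cosine_law_rhs c k a)
    (hb.mono fun x hx => hx.1.le) (hb.mono fun x hx => hx.2) hba).congr_deriv ?_
  have law1 := hb.self_of_nhds.2
  -- `sin a` times the derivative of `cosh b` is `cosh b cos a - cos c = sin a sinh b sinh g`.
  have hderiv :
      sin a * (-(cos c * sin a) + sin c * cos a * k) = sin a * (sinh g * sinh (b a)) := by
    linear_combination -cos a * law1 - law3 - cos c * sin_sq_add_cos_sq a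
  rw [div_eq_iff (sinh_pos_iff.2 hba).ne']
  exact mul_left_cancel₀ ha hderiv

theorem hasDerivAt_sinh_angle {b : ℝ → ℝ} {a c g : ℝ} (hb : HasDerivAt b (sinh g) a)
    (hsb : sinh (b a) ≠ 0) (hc : sin c ≠ 0)
    (law3 : cos c = cos a * cosh (b a) - sin a * sinh (b a) * sinh g) :
    HasDerivAt (fun x => (cosh (b x) * cos c - cos x) / (sinh (b x) * sin c))
      (sin a * cosh g ^ 2 / (sinh (b a) * sin c)) a := by
  refine ((((hasDerivAt_cosh _).comp a hb).mul_const _).sub (hasDerivAt_cos a)).div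
    (((hasDerivAt_sinh _).comp a hb).mul_const _) (mul_ne_zero hsb hc) |>.congr_deriv ?_
  simp only [Pi.sub_apply, Function.comp_apply]
  field_simp
  linear_combination -sinh g * law3 - sinh g * cos c * cosh_sq (b a)
    - sinh (b a) * sin a * cosh_sq g

theorem law_sin_of_law_cos {a b c α γ : ℝ} (hb : sinh b ≠ 0) (ha : 0 < sin a) (hc : 0 < sin c)
    (law2 : cos a = cosh b * cos c - sinh b * sin c * sinh α)
    (law3 : cos c = cos a * cosh b - sin a * sinh b * sinh γ) :
    sin c * cosh α = sin a * cosh γ := by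
  refine (sq_eq_sq₀ (by positivity) (by positivity)).1 ?_
  refine mul_left_cancel₀ (pow_ne_zero 2 hb) ?_
  rw [mul_pow, mul_pow, cosh_sq, cosh_sq]
  linear_combination (sinh b * sin c * sinh α + cosh b * cos c - cos a) * law2
    - (sin a * sinh b * sinh γ + cos a * cosh b - cos c) * law3
    + (cos c ^ 2 - cos a ^ 2) * cosh_sq b
    + sinh b ^ 2 * (sin_sq_add_cos_sq c - sin_sq_add_cos_sq a)

/-- de Sitter trigonometry for a triangle with two time-like edges `ia, ic` and a
space-like edge `b`: with `c, β` fixed and `b`, `α`, `γ` determined by the cosine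
laws as functions of `a`, one has `∂α/∂a = cosh γ / sinh b`. -/
theorem stmt_11 (c β : ℝ) (hc : c ∈ Ioo 0 π)
    (lo hi : ℝ) (hI : Ioo lo hi ⊆ Ioo 0 π)
    (b α γ : ℝ → ℝ)
    (hb : ∀ a ∈ Ioo lo hi, 0 < b a)
    (law1 : ∀ a ∈ Ioo lo hi, cosh (b a) = cos c * cos a + sin c * sin a * cosh β)
    (law2 : ∀ a ∈ Ioo lo hi, cos a = cosh (b a) * cos c - sinh (b a) * sin c * sinh (α a))
    (law3 : ∀ a ∈ Ioo lo hi, cos c = cos a * cosh (b a) - sin a * sinh (b a) * sinh (γ a)) :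
    ∀ a ∈ Ioo lo hi, HasDerivAt α (cosh (γ a) / sinh (b a)) a := by
  intro a ha
  have near_a : ∀ᶠ x in 𝓝 a, x ∈ Ioo lo hi := Ioo_mem_nhds ha.1 ha.2
  have hsa : 0 < sin a := sin_pos_of_pos_of_lt_pi (hI ha).1 (hI ha).2
  have hsc : 0 < sin c := sin_pos_of_pos_of_lt_pi hc.1 hc.2
  have hsb : 0 < sinh (b a) := sinh_pos_iff.2 (hb a ha)
  have hb' : HasDerivAt b (sinh (γ a)) a :=
    hasDerivAt_spacelike_side (near_a.mono fun x hx => ⟨hb x hx, law1 x hx⟩) hsa.ne' (law3 a ha)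
  have hsinhα : (fun x => sinh (α x)) =ᶠ[𝓝 a]
      fun x => (cosh (b x) * cos c - cos x) / (sinh (b x) * sin c) :=
    near_a.mono fun x hx => by
      rw [eq_div_iff (mul_ne_zero (sinh_pos_iff.2 (hb x hx)).ne' hsc.ne')]
      linarith [law2 x hx]
  refine (hasDerivAt_of_sinh_comp_eventuallyEq
    (hasDerivAt_sinh_angle hb' hsb.ne' hsc.ne' (law3 a ha)) hsinhα).congr_deriv ?_
  have hsin := law_sin_of_law_cos hsb.ne' hsa hsc (law2 a ha) (law3 a ha)
  field_simp
  linear_combination -hsin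
end

section
/- Fix a ∈ (0, π) and β ∈ ℝ. Let I ⊆ (0, π) be an open interval and b : I → (0, ∞), α : I → ℝ functions such that for every c ∈ I: cosh(b(c)) = cos c · cos a + sin c · sin a · cosh β, and cos a = cosh(b(c)) · cos c − sinh(b(c)) · sin c · sinh(α(c)). Then α is differentiable on I with α′(c) = − cosh(b(c)) · cosh(α(c)) / sinh(b(c)) for every c ∈ I. -/
/-!
Write `F c = cos c · cos a + sin c · sin a · cosh β`, so that `cosh b = F` and `F'' = -F`.
Since `F c · cos c - cos a = sin c · F' c`, the second cosine law says `sinh α = F' / sinh b`,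
and `F' = sinh b · b'` gives `sinh α = b'`. Differentiating `sinh b · b' = F'` once more,
`cosh b · b'² + sinh b · b'' = -cosh b`, hence `cosh α · α' = b'' = -cosh b · cosh² α / sinh b`.
-/

open Real Set Filter Topology

lemma sinh_eq_div_of_cosine_laws {a q c B A : ℝ} (hc : sin c ≠ 0) (hB : B ≠ 0)
    (law1 : cosh B = cos c * cos a + sin c * q)
    (law2 : cos a = cosh B * cos c - sinh B * sin c * sinh A) :
    sinh A = (-sin c * cos a + cos c * q) / sinh B := by
  rw [eq_div_iff (sinh_ne_zero.2 hB)]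
  refine mul_left_cancel₀ hc ?_
  linear_combination law2 + cos c * law1 + cos a * sin_sq_add_cos_sq c

lemma HasDerivAt.of_sinh_comp {f : ℝ → ℝ} {f' x : ℝ}
    (hf : HasDerivAt (fun y => Real.sinh (f y)) f' x) : HasDerivAt f (f' / Real.cosh (f x)) x := by
  have h := hf.arsinh
  simp only [arsinh_sinh, ← cosh_arsinh] at h
  simpa [div_eq_inv_mul] using h

lemma HasDerivAt.of_cosh_comp {f F : ℝ → ℝ} {F' x : ℝ} (hF : HasDerivAt F F' x)
    (hfF : ∀ᶠ y in 𝓝 x, 0 ≤ f y ∧ Real.cosh (f y) = F y) (hx : f x ≠ 0) :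
    HasDerivAt f (F' / Real.sinh (f x)) x := by
  obtain ⟨hx₀, hFx⟩ := hfF.self_of_nhds
  have hf : f =ᶠ[𝓝 x] fun y => arcosh (F y) :=
    hfF.mono fun y ⟨hy, hcosh⟩ => by simp only [← hcosh, arcosh_cosh hy]
  have hsqrt : √(F x ^ 2 - 1) = Real.sinh (f x) := by
    rw [← hFx, ← sinh_arcosh (one_le_cosh _), arcosh_cosh hx₀]
  have h := (hasDerivAt_arcosh (hFx ▸ one_lt_cosh.2 hx)).comp x hF
  rw [hsqrt] at h
  simpa [div_eq_inv_mul] using h.congr_of_eventuallyEq hf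

theorem stmt_12_general (a β : ℝ)
    (lo hi : ℝ) (hI : Ioo lo hi ⊆ Ioo 0 π)
    (b α : ℝ → ℝ)
    (hb : ∀ c ∈ Ioo lo hi, 0 < b c)
    (law1 : ∀ c ∈ Ioo lo hi, cosh (b c) = cos c * cos a + sin c * sin a * cosh β)
    (law2 : ∀ c ∈ Ioo lo hi, cos a = cosh (b c) * cos c - sinh (b c) * sin c * sinh (α c)) :
    ∀ c ∈ Ioo lo hi, HasDerivAt α (-(cosh (b c) * cosh (α c)) / sinh (b c)) c := by
  intro c hc
  set q := sin a * cosh β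
  set F : ℝ → ℝ := fun x => cos x * cos a + sin x * q
  set F' : ℝ → ℝ := fun x => -sin x * cos a + cos x * q
  have hF : HasDerivAt F (F' c) c :=
    (((hasDerivAt_cos c).mul_const _).add ((hasDerivAt_sin c).mul_const q)).congr_deriv
      (by ring)
  have hF' : HasDerivAt F' (-F c) c :=
    (((hasDerivAt_sin c).neg.mul_const _).add ((hasDerivAt_cos c).mul_const q)).congr_deriv
      (by ring)
  have near : ∀ᶠ x in 𝓝 c, x ∈ Ioo lo hi := isOpen_Ioo.mem_nhds hc
  have hcosh : ∀ x ∈ Ioo lo hi, cosh (b x) = F x := fun x hx => by rw [law1 x hx, mul_assoc]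
  have hsinh : ∀ x ∈ Ioo lo hi, sinh (α x) = F' x / sinh (b x) := fun x hx =>
    sinh_eq_div_of_cosine_laws (sin_pos_of_pos_of_lt_pi (hI hx).1 (hI hx).2).ne'
      (hb x hx).ne' (hcosh x hx) (law2 x hx)
  have hb' : HasDerivAt b (F' c / sinh (b c)) c :=
    hF.of_cosh_comp (near.mono fun x hx => ⟨(hb x hx).le, hcosh x hx⟩)
      (hb c hc).ne'
  have hsinhb : sinh (b c) ≠ 0 := sinh_ne_zero.2 (hb c hc).ne'
  have hα := ((hF'.div (hb'.sinh) hsinhb).congr_of_eventuallyEq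
    (near.mono fun x hx => hsinh x hx)).of_sinh_comp
  convert hα using 1
  have hF'c : F' c = sinh (α c) * sinh (b c) := by rw [hsinh c hc, div_mul_cancel₀ _ hsinhb]
  rw [hF'c, ← hcosh c hc]
  field_simp
  linear_combination -cosh_sq (α c)

/-- de Sitter trigonometry for a triangle with two time-like edges `ia, ic` and a
space-like edge `b`: with `a, β` fixed and `b`, `α` determined by the cosine laws
as functions of `c`, one has `∂α/∂c = - cosh b · cosh α / sinh b`. -/
theorem stmt_12 (a β : ℝ) (ha : a ∈ Ioo 0 π)
    (lo hi : ℝ) (hI : Ioo lo hi ⊆ Ioo 0 π)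
    (b α : ℝ → ℝ)
    (hb : ∀ c ∈ Ioo lo hi, 0 < b c)
    (law1 : ∀ c ∈ Ioo lo hi, cosh (b c) = cos c * cos a + sin c * sin a * cosh β)
    (law2 : ∀ c ∈ Ioo lo hi, cos a = cosh (b c) * cos c - sinh (b c) * sin c * sinh (α c)) :
    ∀ c ∈ Ioo lo hi, HasDerivAt α (-(cosh (b c) * cosh (α c)) / sinh (b c)) c :=
  stmt_12_general a β lo hi hI b α hb law1 law2
end

section
/- Fix β ∈ ℝ. Let I ⊆ (0, π) be an open interval and b : I → (0, ∞), α : I → ℝ functions such that for every a ∈ I: cosh(b(a)) = cos²a + sin²a · cosh β, and cos a = cosh(b(a)) · cos a − sinh(b(a)) · sin a · sinh(α(a)). Then α is differentiable on I with α′(a) = cosh(α(a)) · (1 − cosh(b(a))) / sinh(b(a)) for every a ∈ I. (This is the variation of the angle α of the isosceles time-like triangle, deformed among isosceles triangles with both equal sides of length a.) -/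
open Real Set Filter Topology

/-!
The first cosine law gives `cosh b = 1 + s sin² a` with `s = cosh β - 1 > 0`, hence
`sinh b = s sin a √(m + sin² a)` for `m = 2 / s`, and the second law then solves to
`sinh α = cos a / √(m + sin² a)`. So `α = arsinh ∘ f` for an explicit smooth `f`, and
`α' = f' / cosh α`; with `cosh² α = (m + 1) / (m + sin² a)` this is the claimed formula.
-/

theorem hasDerivAt_of_sinh_eventuallyEq {α f : ℝ → ℝ} {f' a : ℝ} (hf : HasDerivAt f f' a)
    (h : ∀ᶠ x in 𝓝 a, sinh (α x) = f x) : HasDerivAt α (f' / cosh (α a)) a := by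
  have hα : α =ᶠ[𝓝 a] fun x => arsinh (f x) := h.mono fun x hx => by
    show α x = arsinh (f x)
    rw [← hx, arsinh_sinh]
  have hcosh : cosh (α a) = √(1 + f a ^ 2) := by rw [hα.eq_of_nhds, cosh_arsinh]
  simpa [hcosh, div_eq_inv_mul] using hf.arsinh.congr_of_eventuallyEq hα

theorem hasDerivAt_cos_div_sqrt_add_sin_sq {m : ℝ} (hm : 0 < m) (x : ℝ) :
    HasDerivAt (fun x => cos x / √(m + sin x ^ 2))
      (-(m + 1) * sin x / ((m + sin x ^ 2) * √(m + sin x ^ 2))) x := by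
  have hpos : 0 < m + sin x ^ 2 := by positivity
  have hsqrt := (((hasDerivAt_sin x).fun_pow 2).const_add m).sqrt hpos.ne'
  refine ((hasDerivAt_cos x).div hsqrt (Real.sqrt_pos.mpr hpos).ne').congr_deriv ?_
  have hr := Real.sq_sqrt hpos.le
  field_simp
  rw [hr]
  linear_combination (-2 * sin x * (m + sin x ^ 2)) * sin_sq_add_cos_sq x

theorem sinh_eq_of_cosh_eq_one_add {b s S : ℝ} (hb : 0 < b) (hs : 0 < s) (hS : 0 ≤ S)
    (h : cosh b = 1 + s * S ^ 2) : sinh b = s * S * √(2 / s + S ^ 2) := by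
  have hr := Real.sq_sqrt (by positivity : 0 ≤ 2 / s + S ^ 2)
  refine (pow_left_inj₀ (sinh_pos_iff.mpr hb).le (by positivity) two_ne_zero).mp ?_
  rw [sinh_sq, h, mul_pow, mul_pow, hr]
  field_simp
  ring

theorem sinh_eq_of_cosine_laws {b α s S C : ℝ} (hb : 0 < b) (hs : 0 < s) (hS : 0 < S)
    (h₁ : cosh b = 1 + s * S ^ 2) (h₂ : C = cosh b * C - sinh b * S * sinh α) :
    sinh α = C / √(2 / s + S ^ 2) := by
  have hr : 0 < √(2 / s + S ^ 2) := Real.sqrt_pos.mpr (by positivity)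
  rw [sinh_eq_of_cosh_eq_one_add hb hs hS.le h₁, h₁] at h₂
  have : s * S ^ 2 * (C - √(2 / s + S ^ 2) * sinh α) = 0 := by linear_combination -h₂
  rw [eq_div_iff hr.ne']
  linear_combination -(mul_eq_zero.mp this).resolve_left (by positivity)

/-- Variation of the base angle of an isosceles time-like triangle in `AdS₃`, deformed
among isosceles triangles with both time-like edges of length `ia` and fixed apex angle
`β`: one has `∂α/∂a = cosh α · (1 - cosh b) / sinh b`. -/
theorem stmt_13 (β : ℝ)
    (lo hi : ℝ) (hI : Ioo lo hi ⊆ Ioo 0 π)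
    (b α : ℝ → ℝ)
    (hb : ∀ a ∈ Ioo lo hi, 0 < b a)
    (law1 : ∀ a ∈ Ioo lo hi, cosh (b a) = cos a ^ 2 + sin a ^ 2 * cosh β)
    (law2 : ∀ a ∈ Ioo lo hi, cos a = cosh (b a) * cos a - sinh (b a) * sin a * sinh (α a)) :
    ∀ a ∈ Ioo lo hi, HasDerivAt α (cosh (α a) * (1 - cosh (b a)) / sinh (b a)) a := by
  intro a ha
  set s := cosh β - 1
  have hsin : ∀ x ∈ Ioo lo hi, 0 < sin x := fun x hx =>
    sin_pos_of_pos_of_lt_pi (hI hx).1 (hI hx).2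
  have hcosh : ∀ x ∈ Ioo lo hi, cosh (b x) = 1 + s * sin x ^ 2 := fun x hx => by
    linear_combination law1 x hx + sin_sq_add_cos_sq x
  have hs : 0 < s := by
    have hcosh_gt : 1 < cosh (b a) := one_lt_cosh.mpr (hb a ha).ne'
    exact pos_of_mul_pos_left (by linarith [hcosh a ha]) (sq_nonneg (sin a))
  have hsinh : ∀ᶠ x in 𝓝 a, sinh (α x) = cos x / √(2 / s + sin x ^ 2) :=
    eventually_of_mem (Ioo_mem_nhds ha.1 ha.2) fun x hx =>
      sinh_eq_of_cosine_laws (hb x hx) hs (hsin x hx) (hcosh x hx) (law2 x hx)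
  refine (hasDerivAt_of_sinh_eventuallyEq
    (hasDerivAt_cos_div_sqrt_add_sin_sq (by positivity) a) hsinh).congr_deriv ?_
  have hr := Real.sq_sqrt (by positivity : 0 ≤ 2 / s + sin a ^ 2)
  have hcosh_sq : (2 + s * sin a ^ 2) * cosh (α a) ^ 2 = 2 + s := by
    rw [cosh_sq, hsinh.self_of_nhds, div_pow, hr]
    field_simp
    linear_combination s * sin_sq_add_cos_sq a
  rw [hcosh a ha, sinh_eq_of_cosh_eq_one_add (hb a ha) hs (hsin a ha).le (hcosh a ha)]
  have hsin_ne : sin a ≠ 0 := (hsin a ha).ne'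
  have hcosh_ne : cosh (α a) ≠ 0 := (cosh_pos (α a)).ne'
  field_simp
  linear_combination (s * sin a ^ 2) * hcosh_sq
end

section
/- Fix c > 0 and α ∈ (0, π). Let I ⊆ (0, ∞) be an open interval and a : I → (0, π), γ : I → ℝ functions such that for every b ∈ I: cos(a(b)) = − sinh b · sinh c + cosh b · cosh c · cos α, and sinh c = cos(a(b)) · sinh b + sin(a(b)) · cosh b · sinh(γ(b)). Then a is differentiable on I with a′(b) = sinh(γ(b)) for every b ∈ I. -/
open Real Set

/-- Trigonometry in the hyperbolic–de Sitter space `HS²`, for a triangle with two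
vertices in `dS²` joined by a space-like edge of length `a` and one vertex in `H²`,
with edges `b, c` and angle `α` at the hyperbolic vertex: with `c, α` fixed and `a`,
`γ` determined by the cosine laws as functions of `b`, one has `∂a/∂b = sinh γ`. -/
theorem stmt_14 (c α : ℝ) (hc : 0 < c) (hα : α ∈ Ioo 0 π)
    (lo hi : ℝ) (hI : Ioo lo hi ⊆ Ioi 0)
    (a γ : ℝ → ℝ)
    (ha : ∀ b ∈ Ioo lo hi, a b ∈ Ioo 0 π)
    (law1 : ∀ b ∈ Ioo lo hi, cos (a b) = -(sinh b * sinh c) + cosh b * cosh c * cos α)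
    (law2 : ∀ b ∈ Ioo lo hi, sinh c = cos (a b) * sinh b + sin (a b) * cosh b * sinh (γ b)) :
    ∀ b ∈ Ioo lo hi, HasDerivAt a (sinh (γ b)) b := by
  intro b hb
  have haI := ha b hb
  have hsin : 0 < sin (a b) := Real.sin_pos_of_pos_of_lt_pi haI.1 haI.2
  set f : ℝ → ℝ := fun x => -(sinh x * sinh c) + cosh x * (cosh c * cos α) with hf
  have hfa : ∀ x ∈ Ioo lo hi, f x = cos (a x) := by
    intro x hx
    have := law1 x hx
    simp only [hf]
    linarith [this]
  have hfb : f b = cos (a b) := hfa b hb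
  have hsq : cos (a b) ^ 2 < 1 := by
    nlinarith [sin_sq_add_cos_sq (a b)]
  have hne1 : f b ≠ 1 := by rw [hfb]; nlinarith
  have hnem1 : f b ≠ -1 := by rw [hfb]; nlinarith
  have hdf : HasDerivAt f (-(cosh b * sinh c) + sinh b * (cosh c * cos α)) b := by
    have h1 := ((Real.hasDerivAt_sinh b).mul_const (sinh c)).neg
    have h2 := (Real.hasDerivAt_cosh b).mul_const (cosh c * cos α)
    exact h1.add h2
  have harc := (Real.hasDerivAt_arccos hnem1 hne1).comp b hdf
  have hsqrt : Real.sqrt (1 - f b ^ 2) = sin (a b) := by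
    rw [hfb]
    have : 1 - cos (a b) ^ 2 = sin (a b) ^ 2 := by
      nlinarith [sin_sq_add_cos_sq (a b)]
    rw [this, Real.sqrt_sq hsin.le]
  have heq : (fun x => arccos (f x)) =ᶠ[nhds b] a := by
    filter_upwards [isOpen_Ioo.mem_nhds hb] with x hx
    rw [hfa x hx, Real.arccos_cos (ha x hx).1.le (ha x hx).2.le]
  have hval : -(1 / Real.sqrt (1 - f b ^ 2)) * (-(cosh b * sinh c) + sinh b * (cosh c * cos α)) = sinh (γ b) := by
    rw [hsqrt]
    have hl2 := law2 b hb
    have hl1 := law1 b hb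
    have hcosh : (0:ℝ) < cosh b := Real.cosh_pos b
    have hch : cosh b ^ 2 = 1 + sinh b ^ 2 := by
      nlinarith [Real.cosh_sq_sub_sinh_sq b]
    have key : sinh (γ b) * sin (a b) * cosh b
        = (cosh b * sinh c - sinh b * (cosh c * cos α)) * cosh b := by
      linear_combination (-1 : ℝ) * hl2 - sinh b * hl1 - sinh c * hch
    have key2 : sinh (γ b) * sin (a b)
        = cosh b * sinh c - sinh b * (cosh c * cos α) :=
      mul_right_cancel₀ hcosh.ne' key
    field_simp
    linarith [key2]
  have := harc.congr_of_eventuallyEq heq.symm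
  rw [hval] at this
  exact this
end
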